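/- arXiv:1204.0699 — 2 statements merged into one kernel-verified Lean document; each statement's English description precedes it below -/
import Mathlib

section
/- Let A be a commutative ring, M a commutative monoid, and α : M → (A,·) a monoid homomorphism into the multiplicative monoid of A. Regard A as a ℤ[M]-algebra via α and ℤ[M^gp] as a ℤ[M]-algebra via the canonical map M → M^gp. Then the commutative ring ℤ[M^gp] ⊗_{ℤ[M]} A, with its canonical map from A, is the localization of A at the submonoid α(M) of (A,·); that is, IsLocalization holds for the image submonoid of α and the A-algebra ℤ[M^gp] ⊗_{ℤ[M]} A. -/
open TensorProduct

/-- The group completion (Grothendieck group) of a commutative monoid `M`, realized as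
the localization of `M` at the top submonoid, together with its canonical map. -/
abbrev GroupCompletion (M : Type*) [CommMonoid M] := Localization (⊤ : Submonoid M)

/-- The canonical map `M → M^gp` into the group completion. -/
noncomputable def toGroupCompletion (M : Type*) [CommMonoid M] : M →* GroupCompletion M :=
  (Localization.monoidOf (⊤ : Submonoid M)).toMonoidHom

/-!
A localization `M → N` of monoids at `S` induces a localization `k[M] → k[N]` at the image
of `S`: a `k[M]`-algebra map out of `k[N]` is determined by a monoid map out of `N`, hence by
its values on the image of `M`, so the evident maps between `k[N]` and `k[M][S⁻¹]` are mutually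
inverse. For `N = M^gp`, the ring `ℤ[M^gp] ⊗_{ℤ[M]} A` is the base change of this localization
along `ℤ[M] → A`, localization commutes with base change, and the image of `M` in `ℤ[M]` is
carried onto `α(M)`.
-/

namespace MonoidAlgebra

variable {k M N : Type*} [CommSemiring k] [CommMonoid M] [CommMonoid N] {S : Submonoid M}

theorem algHom_subsingleton_of_localizationMap (f : S.LocalizationMap N)
    (P : Type*) [CommSemiring P] [Algebra k[M] P] :
    letI := (mapDomainRingHom k f.toMonoidHom).toAlgebra
    Subsingleton (k[N] →ₐ[k[M]] P) := by
  let := (mapDomainRingHom k f.toMonoidHom).toAlgebra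
  have map_single (m : M) (r : k) : algebraMap k[M] k[N] (single m r) = single (f m) r :=
    mapDomain_single
  refine ⟨fun φ ψ => AlgHom.coe_ringHom_injective <| ringHom_ext (fun r => ?_) (fun n => ?_)⟩
  · have single_one : single 1 r = algebraMap k[M] k[N] (single 1 r) := by
      rw [map_single, map_one]
    rw [AlgHom.coe_toRingHom, AlgHom.coe_toRingHom, single_one, φ.commutes, ψ.commutes]
  · have on_of : (φ : k[N] →* P).comp (of k N) = (ψ : k[N] →* P).comp (of k N) :=
      f.epic_of_localizationMap <| MonoidHom.ext fun m => by
        change φ (single (f m) 1) = ψ (single (f m) 1)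
        rw [← map_single, φ.commutes, ψ.commutes]
    exact DFunLike.congr_fun on_of n

theorem isLocalization_of_localizationMap (f : S.LocalizationMap N) :
    letI := (mapDomainRingHom k f.toMonoidHom).toAlgebra
    IsLocalization (S.map (of k M)) k[N] := by
  let := (mapDomainRingHom k f.toMonoidHom).toAlgebra
  let L := Localization (S.map (of k M))
  have map_single (m : M) (r : k) : algebraMap k[M] k[N] (single m r) = single (f m) r :=
    mapDomain_single
  have map_units : ∀ s : S.map (of k M), IsUnit (algebraMap k[M] k[N] s) := by
    rintro ⟨_, s, hs, rfl⟩
    change IsUnit (algebraMap _ _ (single s 1))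
    rw [map_single]
    exact (f.map_units ⟨s, hs⟩).map (of k N)
  let g : N →* L := f.lift (g := (algebraMap k[M] L : k[M] →* L).comp (of k M))
    fun s => IsLocalization.map_units L ⟨of k M s, Submonoid.mem_map_of_mem _ s.2⟩
  let toL : k[N] →+* L :=
    liftNCRingHom ((algebraMap k[M] L).comp singleOneRingHom) g fun _ _ => Commute.all _ _
  have toL_comp : toL.comp (algebraMap k[M] k[N]) = algebraMap k[M] L := by
    refine ringHom_ext (fun r => ?_) (fun m => ?_)
    · rw [RingHom.comp_apply, map_single, map_one]
      simp [toL]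
    · rw [RingHom.comp_apply, map_single]
      simp only [toL, g, liftNCRingHom_single, map_one, one_mul]
      exact f.lift_eq _ m
  let ofL : L →ₐ[k[M]] k[N] := IsLocalization.liftAlgHom (f := Algebra.ofId _ _) map_units
  have := algHom_subsingleton_of_localizationMap (k := k) f
  exact IsLocalization.isLocalization_of_algEquiv _ <|
    AlgEquiv.ofAlgHom ofL ⟨toL, RingHom.congr_fun toL_comp⟩ (Subsingleton.elim _ _)
      ((IsLocalization.algHom_subsingleton (S.map (of k M))).elim _ _)

theorem algebraMapSubmonoid_map_of {A : Type*} [CommSemiring A] [Algebra k A] (α : M →* A) :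
    letI := (lift k A M α).toRingHom.toAlgebra
    Algebra.algebraMapSubmonoid A (S.map (of k M)) = S.map α := by
  rw [Algebra.algebraMapSubmonoid, ← Submonoid.map_coe_toMonoidHom, Submonoid.map_map]
  exact congrArg (S.map ·) (MonoidHom.ext (lift_of α))

end MonoidAlgebra

/-- For a pre-log ring `(A, M, α)`, the ring `ℤ[M^gp] ⊗_{ℤ[M]} A`, with
its canonical map from `A`, is the localization of `A` at the image submonoid `α(M)` of
the multiplicative monoid of `A`. -/
theorem prelog_pushout_is_localization_at_image (A : Type*) [CommRing A]
    (M : Type*) [CommMonoid M] (α : M →* A) :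
    letI : Algebra (MonoidAlgebra ℤ M) A := ((MonoidAlgebra.lift ℤ A M) α).toRingHom.toAlgebra
    letI : Algebra (MonoidAlgebra ℤ M) (MonoidAlgebra ℤ (GroupCompletion M)) :=
      (MonoidAlgebra.mapDomainRingHom ℤ (toGroupCompletion M)).toAlgebra
    letI : Algebra A (MonoidAlgebra ℤ (GroupCompletion M) ⊗[MonoidAlgebra ℤ M] A) :=
      (Algebra.TensorProduct.includeRight (R := MonoidAlgebra ℤ M)
        (A := MonoidAlgebra ℤ (GroupCompletion M)) (B := A)).toRingHom.toAlgebra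
    IsLocalization (MonoidHom.mrange α)
      (MonoidAlgebra ℤ (GroupCompletion M) ⊗[MonoidAlgebra ℤ M] A) := by
  let := ((MonoidAlgebra.lift ℤ A M) α).toRingHom.toAlgebra
  let := (MonoidAlgebra.mapDomainRingHom ℤ (toGroupCompletion M)).toAlgebra
  have : IsLocalization ((⊤ : Submonoid M).map (MonoidAlgebra.of ℤ M))
      (MonoidAlgebra ℤ (GroupCompletion M)) :=
    MonoidAlgebra.isLocalization_of_localizationMap (Localization.monoidOf ⊤)
  rw [MonoidHom.mrange_eq_map, ← MonoidAlgebra.algebraMapSubmonoid_map_of (k := ℤ)]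
  exact IsLocalization.tensorRight _ _
end

section
/- Let A be an integral domain and let M = A∖{0} be the submonoid of nonzero elements of the multiplicative monoid (A,·). Regard A as a ℤ[M]-algebra via the inclusion M → A and ℤ[M^gp] as a ℤ[M]-algebra via the group-completion map M → M^gp. Then the canonical map A → ℤ[M^gp] ⊗_{ℤ[M]} A exhibits the tensor product as a fraction field of A; that is, ℤ[M^gp] ⊗_{ℤ[M]} A together with this map satisfies IsFractionRing A (ℤ[M^gp] ⊗_{ℤ[M]} A). -/
/-!
Since `M = A ∖ {0}` is cancellative, `M → M^gp` is injective and `ℤ[M^gp]` is the localization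
of `ℤ[M]` at its monomials. Localization commutes with base change, so
`ℤ[M^gp] ⊗_{ℤ[M]} A` is the localization of `A` at the image of the monomials, which is `A ∖ {0}`.
-/

open TensorProduct

/-- The submonoid `A ∖ {0}` of the multiplicative monoid of an integral domain `A`. -/
def nonzeroSubmonoid (A : Type*) [CommRing A] [IsDomain A] : Submonoid A where
  carrier := {a : A | a ≠ 0}
  one_mem' := one_ne_zero
  mul_mem' := fun ha hb => mul_ne_zero ha hb

namespace MonoidAlgebra

variable {R M N : Type*} [CommSemiring R] [CommMonoid M] [CommMonoid N] {S : Submonoid M}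

theorem isLocalization_mapDomain (f : S.LocalizationMap N) (hf : Function.Injective f) :
    letI := (mapDomainRingHom R f.toMonoidHom).toAlgebra
    IsLocalization (S.map (of R M)) R[N] := by
  let := (mapDomainRingHom R f.toMonoidHom).toAlgebra
  have algebraMap_single (m : M) (r : R) :
      algebraMap R[M] R[N] (single m r) = single (f m) r := mapDomain_single
  refine ⟨?_, fun z => ?_, fun {x y} h => ⟨1, ?_⟩⟩
  · rintro ⟨-, ⟨s, hs, rfl⟩⟩
    simpa only [of_apply, algebraMap_single] using (f.map_units ⟨s, hs⟩).map (of R N)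
  · induction z using MonoidAlgebra.induction_linear with
    | zero => exact ⟨(0, 1), by simp⟩
    | add x y hx hy =>
      obtain ⟨⟨a, s⟩, hs⟩ := hx
      obtain ⟨⟨b, t⟩, ht⟩ := hy
      refine ⟨(a * t + b * s, s * t), ?_⟩
      simp only [Submonoid.coe_mul, map_add, map_mul, ← hs, ← ht]
      ring
    | single n r =>
      obtain ⟨⟨m, s⟩, hn⟩ := f.surj n
      refine ⟨(single m r, ⟨single s 1, s, s.2, rfl⟩), ?_⟩
      simp only [algebraMap_single, single_mul_single, mul_one, hn]
  · simpa using mapDomain_injective hf h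

theorem algebraMapSubmonoid_map_of_s11 {B : Type*} [CommSemiring B] [Algebra R B] (g : M →* B) :
    letI := (lift R B M g).toRingHom.toAlgebra
    Algebra.algebraMapSubmonoid B (S.map (of R M)) = S.map g := by
  let := (lift R B M g).toRingHom.toAlgebra
  ext b
  simp [Algebra.algebraMapSubmonoid, Submonoid.mem_map, RingHom.algebraMap_toAlgebra]

end MonoidAlgebra

theorem nonzeroSubmonoid_eq_nonZeroDivisors (A : Type*) [CommRing A] [IsDomain A] :
    nonzeroSubmonoid A = nonZeroDivisors A := by
  ext a
  exact mem_nonZeroDivisors_iff_ne_zero.symm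

instance (A : Type*) [CommRing A] [IsDomain A] : IsCancelMul (nonzeroSubmonoid A) where
  mul_left_cancel a _ _ h := Subtype.ext (mul_left_cancel₀ a.2 (congrArg Subtype.val h))
  mul_right_cancel a _ _ h := Subtype.ext (mul_right_cancel₀ a.2 (congrArg Subtype.val h))

/-- For an integral domain `A` with `M = A ∖ {0}`, the canonical map
`A → ℤ[M^gp] ⊗_{ℤ[M]} A` exhibits the tensor product as a fraction field of `A`. -/
theorem prelog_localization_of_domain_is_fraction_field (A : Type*) [CommRing A] [IsDomain A] :
    letI : Algebra (MonoidAlgebra ℤ (nonzeroSubmonoid A)) A :=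
      ((MonoidAlgebra.lift ℤ A (nonzeroSubmonoid A)) (nonzeroSubmonoid A).subtype).toRingHom.toAlgebra
    letI : Algebra (MonoidAlgebra ℤ (nonzeroSubmonoid A))
        (MonoidAlgebra ℤ (GroupCompletion (nonzeroSubmonoid A))) :=
      (MonoidAlgebra.mapDomainRingHom ℤ (toGroupCompletion (nonzeroSubmonoid A))).toAlgebra
    letI : Algebra A (MonoidAlgebra ℤ (GroupCompletion (nonzeroSubmonoid A))
        ⊗[MonoidAlgebra ℤ (nonzeroSubmonoid A)] A) :=
      (Algebra.TensorProduct.includeRight (R := MonoidAlgebra ℤ (nonzeroSubmonoid A))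
        (A := MonoidAlgebra ℤ (GroupCompletion (nonzeroSubmonoid A))) (B := A)).toRingHom.toAlgebra
    IsFractionRing A (MonoidAlgebra ℤ (GroupCompletion (nonzeroSubmonoid A))
        ⊗[MonoidAlgebra ℤ (nonzeroSubmonoid A)] A) := by
  let M := nonzeroSubmonoid A
  let := (MonoidAlgebra.lift ℤ A M M.subtype).toRingHom.toAlgebra
  let := (MonoidAlgebra.mapDomainRingHom ℤ (toGroupCompletion M)).toAlgebra
  let := Algebra.TensorProduct.rightAlgebra (R := MonoidAlgebra ℤ M)
    (A := MonoidAlgebra ℤ (GroupCompletion M)) (B := A)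
  have : IsLocalization ((⊤ : Submonoid M).map (MonoidAlgebra.of ℤ M))
      (MonoidAlgebra ℤ (GroupCompletion M)) :=
    -- `toGroupCompletion` is `Algebra.GrothendieckGroup.of` by unfolding
    MonoidAlgebra.isLocalization_mapDomain _ Algebra.GrothendieckGroup.of_injective
  have hloc := IsLocalization.tensorRight (MonoidAlgebra ℤ (GroupCompletion M)) (S := A)
    ((⊤ : Submonoid M).map (MonoidAlgebra.of ℤ M))
  rw [MonoidAlgebra.algebraMapSubmonoid_map_of_s11, ← MonoidHom.mrange_eq_map,
    Submonoid.mrange_subtype] at hloc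
  convert hloc using 1
  exact (nonzeroSubmonoid_eq_nonZeroDivisors A).symm
end
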